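/- Let Γ be a tropical curve. A subset A ⊆ Γ is rank-determining if and only if for every divisor D of nonnegative rank on Γ the following are equivalent: (i) r(D) ≥ 1; (ii) for every point P ∈ A, P lies in the support of the P-reduced divisor D_P (i.e. D_P(P) ≥ 1). -/

import Mathlib

open scoped Classical

/-- A combinatorial model of a metric graph: a finite multigraph with positive
edge lengths. -/
structure GraphModel where
  V : Type
  E : Type
  [fintV : Fintype V]
  [fintE : Fintype E]
  src : E → V
  tgt : E → V
  len : E → ℝ
  len_pos : ∀ e, 0 < len e

attribute [instance] GraphModel.fintV GraphModel.fintE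

/-- A (compact, connected) tropical curve: a compact connected metric space `Γ`
which is the geometric realization of a finite multigraph with positive edge
lengths, equipped with the induced path metric.  Each edge `e` is realized by a
parametrization `edge e : [0, len e] → Γ` joining its endpoints, injective on the
interior, the interiors of distinct edges are disjoint and avoid the vertices,
the edges and vertices cover `Γ`, and the metric is the associated path metric. -/
structure TropicalCurve where
  Γ : Type
  [met : MetricSpace Γ]
  [cpt : CompactSpace Γ]
  [conn : ConnectedSpace Γ]
  G : GraphModel
  vtx : G.V → Γ
  edge : G.E → ℝ → Γ
  vtx_inj : Function.Injective vtx
  edge_src : ∀ e, edge e 0 = vtx (G.src e)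
  edge_tgt : ∀ e, edge e (G.len e) = vtx (G.tgt e)
  edge_inj : ∀ e, Set.InjOn (edge e) (Set.Ioo 0 (G.len e))
  interior_disjoint : ∀ e e' t t', t ∈ Set.Ioo 0 (G.len e) → t' ∈ Set.Ioo 0 (G.len e') →
    edge e t = edge e' t' → e = e' ∧ t = t'
  interior_not_vtx : ∀ e t v, t ∈ Set.Ioo 0 (G.len e) → edge e t ≠ vtx v
  cover : ∀ x : Γ, (∃ v, x = vtx v) ∨ ∃ e t, t ∈ Set.Ioo 0 (G.len e) ∧ x = edge e t
  path_metric : ∀ x y : Γ, dist x y = sInf { d : ℝ | ∃ (n : ℕ) (p : ℕ → Γ) (δ : ℕ → ℝ),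
    p 0 = x ∧ p n = y ∧ (∀ i < n, ∃ (e : G.E) (s t : ℝ), s ∈ Set.Icc 0 (G.len e) ∧
      t ∈ Set.Icc 0 (G.len e) ∧ p i = edge e s ∧ p (i+1) = edge e t ∧ δ i = |s - t|) ∧
    d = ∑ i ∈ Finset.range n, δ i }

attribute [instance] TropicalCurve.met TropicalCurve.cpt TropicalCurve.conn

namespace TropicalCurve

variable (C : TropicalCurve)

/-- A divisor on a tropical curve: a finitely supported function `Γ → ℤ`. -/
abbrev Divisor := C.Γ →₀ ℤ

/-- A divisor is effective if all its coefficients are nonnegative. -/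
def Effective (D : Divisor C) : Prop := ∀ v, 0 ≤ D v

/-- The degree of a divisor: the sum of its coefficients. -/
def deg (D : Divisor C) : ℤ := D.sum fun _ n => n

/-- `f` has (outgoing) slope `m` to the right of the point with parameter `t₀`
on the edge `e`. -/
def HasSlopeR (f : C.Γ → ℝ) (e : C.G.E) (t₀ : ℝ) (m : ℤ) : Prop :=
  ∃ ε > 0, t₀ + ε ≤ C.G.len e ∧ ∀ s ∈ Set.Icc t₀ (t₀ + ε),
    f (C.edge e s) = f (C.edge e t₀) + m * (s - t₀)

/-- `f` has (outgoing) slope `m` to the left of the point with parameter `t₀`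
on the edge `e`. -/
def HasSlopeL (f : C.Γ → ℝ) (e : C.G.E) (t₀ : ℝ) (m : ℤ) : Prop :=
  ∃ ε > 0, 0 ≤ t₀ - ε ∧ ∀ s ∈ Set.Icc (t₀ - ε) t₀,
    f (C.edge e s) = f (C.edge e t₀) + m * (t₀ - s)

/-- The branches (outgoing directions) at a point `x` of a tropical curve.  A
branch is encoded by an edge `e`, a parameter `t` with `edge e t = x`, and a
Boolean : `true` for the rightward direction, `false` for the leftward one. -/
def IsBranchAt (b : C.G.E × ℝ × Bool) (x : C.Γ) : Prop :=
  C.edge b.1 b.2.1 = x ∧ b.2.1 ∈ Set.Icc 0 (C.G.len b.1) ∧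
    (if b.2.2 then b.2.1 < C.G.len b.1 else 0 < b.2.1)

/-- `ord_f(x) = n` : the sum of the outgoing slopes of `f` over all branches
emanating from `x` equals `n`. -/
def HasOrderAt (f : C.Γ → ℝ) (x : C.Γ) (n : ℤ) : Prop :=
  ∃ (S : Finset (C.G.E × ℝ × Bool)) (m : C.G.E × ℝ × Bool → ℤ),
    (∀ b, b ∈ S ↔ C.IsBranchAt b x) ∧
    (∀ b ∈ S, if b.2.2 then C.HasSlopeR f b.1 b.2.1 (m b)
      else C.HasSlopeL f b.1 b.2.1 (m b)) ∧
    n = ∑ b ∈ S, m b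

/-- A rational function on a tropical curve: a continuous function which is
piecewise linear with integer slopes and finitely many linear pieces on every
edge. -/
def IsRational (f : C.Γ → ℝ) : Prop :=
  Continuous f ∧ ∀ e : C.G.E, ∃ (n : ℕ) (t : ℕ → ℝ), 0 < n ∧ t 0 = 0 ∧ t n = C.G.len e ∧
    (∀ i < n, t i < t (i+1)) ∧
    ∀ i < n, ∃ (m : ℤ) (b : ℝ), ∀ s ∈ Set.Icc (t i) (t (i+1)),
      f (C.edge e s) = m * s + b

/-- Two divisors are linearly equivalent if their difference is the divisor of a
rational function: `D - D' = div(f)`. -/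
def LinEquiv (D D' : Divisor C) : Prop :=
  ∃ f : C.Γ → ℝ, C.IsRational f ∧ ∀ x, C.HasOrderAt f x (D x - D' x)

/-- `f ∈ R(D)` : `f` is a rational function with `D + div(f) ≥ 0`. -/
def InR (D : Divisor C) (f : C.Γ → ℝ) : Prop :=
  C.IsRational f ∧ ∃ E : Divisor C, C.Effective E ∧ ∀ x, C.HasOrderAt f x (E x - D x)

/-- The branch `b` at `v` leaves the set `X`: some initial punctured segment
along `b` stays in `Γ ∖ (X ∖ {v})`. -/
def BranchLeaving (X : Set C.Γ) (v : C.Γ) (b : C.G.E × ℝ × Bool) : Prop :=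
  C.IsBranchAt b v ∧
    (if b.2.2 then ∃ ε > 0, b.2.1 + ε ≤ C.G.len b.1 ∧
        ∀ s ∈ Set.Ioc b.2.1 (b.2.1 + ε), C.edge b.1 s ∈ X → C.edge b.1 s = v
      else ∃ ε > 0, 0 ≤ b.2.1 - ε ∧
        ∀ s ∈ Set.Ico (b.2.1 - ε) b.2.1, C.edge b.1 s ∈ X → C.edge b.1 s = v)

/-- `deg_X^out(v)` : the number of edges (branch directions) leaving `X` at `v`,
i.e. the maximal number of internally disjoint segments in `Γ ∖ (X ∖ {v})` with
an end at `v`. -/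
noncomputable def outDeg (X : Set C.Γ) (v : C.Γ) : ℕ :=
  {b | C.BranchLeaving X v b}.ncard

/-- The degree (valence) of a point: the number of branches of `Γ` at `v`. -/
noncomputable def pointDeg (v : C.Γ) : ℕ := C.outDeg {v} v

/-- `D` is `v₀`-reduced: its coefficients away from `v₀` are nonnegative, and
every closed connected subset `X ⊆ Γ` avoiding `v₀` has a non-saturated boundary
point, i.e. some `v ∈ ∂X` with `D(v) < deg_X^out(v)`. -/
def IsReduced (v₀ : C.Γ) (D : Divisor C) : Prop :=
  (∀ v, v ≠ v₀ → 0 ≤ D v) ∧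
  ∀ X : Set C.Γ, IsClosed X → IsConnected X → v₀ ∉ X →
    ∃ v ∈ frontier X, D v < (C.outDeg X v : ℤ)

/-- `D` is linearly equivalent to an effective divisor. -/
def EquivEffective (D : Divisor C) : Prop :=
  ∃ E : Divisor C, C.Effective E ∧ C.LinEquiv D E

/-- The rank of a divisor: the largest `r ≥ -1` such that for every effective
divisor `E` of degree `r`, `D - E` is linearly equivalent to an effective
divisor (`-1` when `D` itself is not equivalent to an effective divisor). -/
noncomputable def rank (D : Divisor C) : ℤ :=
  sSup {r : ℤ | -1 ≤ r ∧ ∀ E : Divisor C, C.Effective E → C.deg E = r →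
    C.EquivEffective (D - E)}

/-- The genus of a tropical curve: its first Betti number, computed from any
model as `#E - #V + 1`. -/
noncomputable def genus : ℤ :=
  (Fintype.card C.G.E : ℤ) - (Fintype.card C.G.V : ℤ) + 1

/-- `D` is very ample: the rational functions in `R(D)` separate the points
of `Γ`. -/
def VeryAmple (D : Divisor C) : Prop :=
  ∀ P Q : C.Γ, P ≠ Q → ∃ f g : C.Γ → ℝ, C.InR D f ∧ C.InR D g ∧ f P - g P ≠ f Q - g Q

/-- `D` is ample: some positive integer multiple of `D` is very ample. -/
def Ample (D : Divisor C) : Prop := ∃ m : ℕ, 0 < m ∧ C.VeryAmple (m • D)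

end TropicalCurve

/-- The rank of `D` computed using only effective divisors supported on `A`:
the largest `r ≥ -1` such that for every effective divisor `E` of degree `r`
with support contained in `A`, `D - E` is equivalent to an effective divisor. -/
noncomputable def TropicalCurve.rankOn (C : TropicalCurve) (A : Set C.Γ)
    (D : TropicalCurve.Divisor C) : ℤ :=
  sSup {r : ℤ | -1 ≤ r ∧ ∀ E : TropicalCurve.Divisor C, C.Effective E →
    C.deg E = r → ↑E.support ⊆ A → C.EquivEffective (D - E)}

/-- `A` is a rank-determining subset of `Γ`: for every divisor `D`, the rank of
`D` equals the rank computed using only effective divisors supported on `A`. -/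
def TropicalCurve.RankDetermining (C : TropicalCurve) (A : Set C.Γ) : Prop :=
  ∀ D : TropicalCurve.Divisor C, C.rank D = C.rankOn A D

/-! The key fact is that for a `P`-reduced divisor `D_P ~ D`, `D_P(P) ≥ 1` if and only if `D - (P)`
is equivalent to an effective divisor: an effective `D_P + div(h)` with a larger coefficient at `P`
would make the minimum locus of `h` violate reducedness. So (ii) says that `D - (P)` is equivalent
to an effective divisor for every `P ∈ A`, which is `r(D) ≥ 1` when `A` is rank-determining.
Conversely, if (ii) implies (i), points can be removed one at a time: if `D - F - (P)` is
equivalent to an effective divisor for all `P ∈ A`, then so is `D - F - (Q)` for every `Q`, and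
induction on the degree shows that effective divisors supported on `A` already test the full
rank. Invariance of the degree under linear equivalence keeps both ranks finite. -/

lemma isClosed_connectedComponentIn {α : Type*} [TopologicalSpace α] {F : Set α}
    (hF : IsClosed F) (x : α) : IsClosed (connectedComponentIn F x) := by
  rcases (connectedComponentIn F x).eq_empty_or_nonempty with h | ⟨y, hy⟩
  · exact h ▸ isClosed_empty
  rw [connectedComponentIn_eq hy]
  have hyF : y ∈ F := connectedComponentIn_subset F x hy
  refine isClosed_of_closure_subset (isPreconnected_connectedComponentIn.closure
    |>.subset_connectedComponentIn (subset_closure (mem_connectedComponentIn hyF)) ?_)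
  exact hF.closure_subset_iff.mpr (connectedComponentIn_subset F y)

namespace TropicalCurve

variable {C : TropicalCurve}

section Divisors

lemma deg_eq_sum_of_support_subset {D : Divisor C} {T : Finset C.Γ} (hT : D.support ⊆ T) :
    C.deg D = ∑ x ∈ T, D x :=
  Finsupp.sum_of_support_subset D hT (fun _ n => n) fun _ _ => rfl

lemma deg_add (D E : Divisor C) : C.deg (D + E) = C.deg D + C.deg E :=
  Finsupp.sum_add_index' (fun _ => rfl) fun _ _ _ => rfl

lemma deg_sub (D E : Divisor C) : C.deg (D - E) = C.deg D - C.deg E :=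
  Finsupp.sum_sub_index fun _ _ _ => rfl

lemma deg_single (x : C.Γ) (n : ℤ) : C.deg (Finsupp.single x n) = n :=
  Finsupp.sum_single_index rfl

lemma deg_zero : C.deg (0 : Divisor C) = 0 :=
  Finsupp.sum_zero_index

lemma effective_zero : C.Effective (0 : Divisor C) := fun _ => le_rfl

lemma effective_single (x : C.Γ) {n : ℤ} (hn : 0 ≤ n) : C.Effective (Finsupp.single x n) := by
  intro v
  rw [Finsupp.single_apply]
  split_ifs <;> omega

lemma Effective.add {D E : Divisor C} (hD : C.Effective D) (hE : C.Effective E) :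
    C.Effective (D + E) :=
  fun v => add_nonneg (hD v) (hE v)

lemma Effective.deg_nonneg {E : Divisor C} (hE : C.Effective E) : 0 ≤ C.deg E :=
  Finset.sum_nonneg fun x _ => hE x

lemma Effective.eq_zero_of_deg_eq_zero {E : Divisor C} (hE : C.Effective E)
    (h : C.deg E = 0) : E = 0 := by
  ext x
  by_cases hx : x ∈ E.support
  · exact (Finset.sum_eq_zero_iff_of_nonneg fun y _ => hE y).mp h x hx
  · simpa using hx

lemma Effective.exists_eq_add_single {E : Divisor C} (hE : C.Effective E) (h : 0 < C.deg E) :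
    ∃ Q E', C.Effective E' ∧ E = E' + Finsupp.single Q 1 := by
  obtain ⟨Q, hQ⟩ : ∃ Q, E Q ≠ 0 := by
    by_contra! h0
    rw [show E = 0 from Finsupp.ext h0, deg_zero] at h
    exact h.false
  refine ⟨Q, E - Finsupp.single Q 1, fun v => ?_, (sub_add_cancel _ _).symm⟩
  rw [Finsupp.sub_apply, Finsupp.single_apply]
  split_ifs with hv
  · have := hE Q; subst hv; omega
  · simpa using hE v

lemma Effective.eq_single_of_deg_eq_one {E : Divisor C} (hE : C.Effective E)
    (h : C.deg E = 1) : ∃ P, E = Finsupp.single P 1 := by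
  obtain ⟨P, E', hE', rfl⟩ := hE.exists_eq_add_single (by omega)
  rw [deg_add, deg_single] at h
  rw [hE'.eq_zero_of_deg_eq_zero (by omega), zero_add]
  exact ⟨P, rfl⟩

lemma support_add_single_subset {A : Set C.Γ} {F : Divisor C} (hF : ↑F.support ⊆ A)
    {P : C.Γ} (hP : P ∈ A) (n : ℤ) : ↑(F + Finsupp.single P n).support ⊆ A := by
  intro v hv
  rcases Finset.mem_union.mp (Finsupp.support_add hv) with h | h
  · exact hF h
  · rw [Finset.mem_singleton.mp (Finsupp.support_single_subset h)]
    exact hP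

end Divisors

section Edges

lemma lipschitzOnWith_edge (e : C.G.E) :
    LipschitzOnWith 1 (C.edge e) (Set.Icc 0 (C.G.len e)) := by
  refine LipschitzOnWith.of_dist_le_mul fun s hs t ht => ?_
  rw [NNReal.coe_one, one_mul, Real.dist_eq, C.path_metric]
  refine csInf_le ⟨0, ?_⟩ ⟨1, fun i => if i = 0 then C.edge e s else C.edge e t,
    fun _ => |s - t|, by simp, by simp, fun i hi => ?_, by simp⟩
  · rintro d ⟨n, p, δ, -, -, hstep, rfl⟩
    refine Finset.sum_nonneg fun i hi => ?_
    obtain ⟨_, _, _, _, _, _, _, hδ⟩ := hstep i (Finset.mem_range.mp hi)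
    exact hδ ▸ abs_nonneg _
  · obtain rfl : i = 0 := by omega
    exact ⟨e, s, t, hs, ht, by simp, by simp, rfl⟩

lemma edge_ne_of_mem_Ioo {e : C.G.E} {s t : ℝ} (hs : s ∈ Set.Ioo 0 (C.G.len e))
    (ht : t ∈ Set.Icc 0 (C.G.len e)) (hst : s ≠ t) : C.edge e s ≠ C.edge e t := by
  rcases ht.1.eq_or_lt with rfl | ht0
  · rw [C.edge_src]; exact C.interior_not_vtx e s _ hs
  rcases ht.2.eq_or_lt with rfl | htl
  · rw [C.edge_tgt]; exact C.interior_not_vtx e s _ hs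
  exact fun h => hst (C.interior_disjoint e e s t hs ⟨ht0, htl⟩ h).2

lemma finite_edge_preimage (e : C.G.E) {T : Set C.Γ} (hT : T.Finite) :
    {s | s ∈ Set.Icc 0 (C.G.len e) ∧ C.edge e s ∈ T}.Finite := by
  have hint : (Set.Ioo 0 (C.G.len e) ∩ C.edge e ⁻¹' T).Finite :=
    Set.Finite.of_finite_image (hT.subset (Set.image_subset_iff.mpr fun _ h => h.2))
      ((C.edge_inj e).mono Set.inter_subset_left)
  refine (hint.union (Set.toFinite {0, C.G.len e})).subset fun s ⟨hs, hsT⟩ => ?_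
  rcases hs.1.eq_or_lt with rfl | hs0
  · exact Or.inr (Or.inl rfl)
  rcases hs.2.eq_or_lt with rfl | hsl
  · exact Or.inr (Or.inr rfl)
  exact Or.inl ⟨⟨hs0, hsl⟩, hsT⟩

lemma finite_setOf_isBranchAt (x : C.Γ) : {b | C.IsBranchAt b x}.Finite := by
  refine (Set.finite_univ.prod ((Set.finite_iUnion fun e =>
    finite_edge_preimage e (Set.finite_singleton x)).prod Set.finite_univ)).subset ?_
  rintro ⟨e, s, d⟩ ⟨hx, hs, -⟩
  exact ⟨trivial, Set.mem_iUnion.mpr ⟨e, hs, hx⟩, trivial⟩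

end Edges

section Slopes

variable {f g : C.Γ → ℝ} {e : C.G.E} {t : ℝ} {m m' : ℤ}

lemma HasSlopeR.unique (h : C.HasSlopeR f e t m) (h' : C.HasSlopeR f e t m') : m = m' := by
  obtain ⟨ε, hε, -, H⟩ := h
  obtain ⟨ε', hε', -, H'⟩ := h'
  have hδ : 0 < min ε ε' := lt_min hε hε'
  have h1 := H (t + min ε ε') ⟨by linarith, by linarith [min_le_left ε ε']⟩
  have h2 := H' (t + min ε ε') ⟨by linarith, by linarith [min_le_right ε ε']⟩
  have : (m : ℝ) * min ε ε' = m' * min ε ε' := by linarith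
  exact_mod_cast mul_right_cancel₀ hδ.ne' this

lemma HasSlopeL.unique (h : C.HasSlopeL f e t m) (h' : C.HasSlopeL f e t m') : m = m' := by
  obtain ⟨ε, hε, -, H⟩ := h
  obtain ⟨ε', hε', -, H'⟩ := h'
  have hδ : 0 < min ε ε' := lt_min hε hε'
  have h1 := H (t - min ε ε') ⟨by linarith [min_le_left ε ε'], by linarith⟩
  have h2 := H' (t - min ε ε') ⟨by linarith [min_le_right ε ε'], by linarith⟩
  have : (m : ℝ) * min ε ε' = m' * min ε ε' := by linarith
  exact_mod_cast mul_right_cancel₀ hδ.ne' this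

lemma HasSlopeR.add (h : C.HasSlopeR f e t m) (h' : C.HasSlopeR g e t m') :
    C.HasSlopeR (fun y => f y + g y) e t (m + m') := by
  obtain ⟨ε, hε, hle, H⟩ := h
  obtain ⟨ε', hε', -, H'⟩ := h'
  refine ⟨min ε ε', lt_min hε hε', by linarith [min_le_left ε ε'], fun s hs => ?_⟩
  dsimp only
  rw [H s ⟨hs.1, hs.2.trans (by linarith [min_le_left ε ε'])⟩,
    H' s ⟨hs.1, hs.2.trans (by linarith [min_le_right ε ε'])⟩]
  push_cast
  ring

lemma HasSlopeL.add (h : C.HasSlopeL f e t m) (h' : C.HasSlopeL g e t m') :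
    C.HasSlopeL (fun y => f y + g y) e t (m + m') := by
  obtain ⟨ε, hε, hle, H⟩ := h
  obtain ⟨ε', hε', -, H'⟩ := h'
  refine ⟨min ε ε', lt_min hε hε', by linarith [min_le_left ε ε'], fun s hs => ?_⟩
  dsimp only
  rw [H s ⟨(by linarith [min_le_left ε ε'] : t - ε ≤ _).trans hs.1, hs.2⟩,
    H' s ⟨(by linarith [min_le_right ε ε'] : t - ε' ≤ _).trans hs.1, hs.2⟩]
  push_cast
  ring

lemma HasSlopeR.neg (h : C.HasSlopeR f e t m) : C.HasSlopeR (fun y => -f y) e t (-m) := by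
  obtain ⟨ε, hε, hle, H⟩ := h
  exact ⟨ε, hε, hle, fun s hs => by dsimp only; rw [H s hs]; push_cast; ring⟩

lemma HasSlopeL.neg (h : C.HasSlopeL f e t m) : C.HasSlopeL (fun y => -f y) e t (-m) := by
  obtain ⟨ε, hε, hle, H⟩ := h
  exact ⟨ε, hε, hle, fun s hs => by dsimp only; rw [H s hs]; push_cast; ring⟩

def HasBranchSlope (f : C.Γ → ℝ) (b : C.G.E × ℝ × Bool) (m : ℤ) : Prop :=
  if b.2.2 then C.HasSlopeR f b.1 b.2.1 m else C.HasSlopeL f b.1 b.2.1 m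

variable {b : C.G.E × ℝ × Bool}

lemma HasBranchSlope.unique (h : C.HasBranchSlope f b m) (h' : C.HasBranchSlope f b m') :
    m = m' := by
  unfold HasBranchSlope at h h'
  split_ifs at h h'
  exacts [h.unique h', h.unique h']

lemma HasBranchSlope.add (h : C.HasBranchSlope f b m) (h' : C.HasBranchSlope g b m') :
    C.HasBranchSlope (fun y => f y + g y) b (m + m') := by
  unfold HasBranchSlope at *
  split_ifs at *
  exacts [h.add h', h.add h']

lemma HasBranchSlope.neg (h : C.HasBranchSlope f b m) :
    C.HasBranchSlope (fun y => -f y) b (-m) := by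
  unfold HasBranchSlope at *
  split_ifs at *
  exacts [h.neg, h.neg]

lemma hasBranchSlope_const (c : ℝ) {x : C.Γ} (hb : C.IsBranchAt b x) :
    C.HasBranchSlope (fun _ => c) b 0 := by
  obtain ⟨-, ⟨h0, hl⟩, hdir⟩ := hb
  unfold HasBranchSlope
  split_ifs at hdir ⊢
  · exact ⟨C.G.len b.1 - b.2.1, by linarith, by linarith, fun _ _ => by simp⟩
  · exact ⟨b.2.1, hdir, by linarith, fun _ _ => by simp⟩

lemma HasOrderAt.add {x : C.Γ} {n n' : ℤ} (h : C.HasOrderAt f x n) (h' : C.HasOrderAt g x n') :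
    C.HasOrderAt (fun y => f y + g y) x (n + n') := by
  obtain ⟨S, k, hS, hk, rfl⟩ := h
  obtain ⟨S', k', hS', hk', rfl⟩ := h'
  obtain rfl : S = S' := Finset.ext fun b => (hS b).trans (hS' b).symm
  exact ⟨S, k + k', hS, fun b hb => HasBranchSlope.add (hk b hb) (hk' b hb),
    Finset.sum_add_distrib.symm⟩

lemma HasOrderAt.neg {x : C.Γ} {n : ℤ} (h : C.HasOrderAt f x n) :
    C.HasOrderAt (fun y => -f y) x (-n) := by
  obtain ⟨S, k, hS, hk, rfl⟩ := h
  exact ⟨S, -k, hS, fun b hb => HasBranchSlope.neg (hk b hb), by simp⟩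

lemma hasOrderAt_const (c : ℝ) (x : C.Γ) : C.HasOrderAt (fun _ => c) x 0 :=
  ⟨(finite_setOf_isBranchAt x).toFinset, 0, fun _ => Set.Finite.mem_toFinset _,
    fun _ hb => hasBranchSlope_const c ((finite_setOf_isBranchAt x).mem_toFinset.mp hb), by simp⟩

lemma isRational_const (c : ℝ) : C.IsRational (fun _ => c) := by
  refine ⟨continuous_const, fun e => ⟨1, fun i => if i = 0 then 0 else C.G.len e, one_pos,
    rfl, rfl, fun i hi => ?_, fun i _ => ⟨0, c, fun _ _ => by simp⟩⟩⟩
  obtain rfl : i = 0 := by omega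
  simpa using C.G.len_pos e

lemma IsRational.neg (h : C.IsRational f) : C.IsRational (fun y => -f y) := by
  obtain ⟨hc, hp⟩ := h
  refine ⟨hc.neg, fun e => ?_⟩
  obtain ⟨n, t, hn, h0, hl, hmono, hpiece⟩ := hp e
  refine ⟨n, t, hn, h0, hl, hmono, fun i hi => ?_⟩
  obtain ⟨k, c, hkc⟩ := hpiece i hi
  exact ⟨-k, -c, fun s hs => by dsimp only; rw [hkc s hs]; push_cast; ring⟩

end Slopes

section LinearEquivalence

variable {D D' E F : Divisor C}

lemma LinEquiv.refl (D : Divisor C) : C.LinEquiv D D :=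
  ⟨fun _ => 0, isRational_const 0, fun x => by simpa using hasOrderAt_const 0 x⟩

lemma LinEquiv.symm (h : C.LinEquiv D D') : C.LinEquiv D' D := by
  obtain ⟨f, hf, ho⟩ := h
  exact ⟨fun y => -f y, hf.neg, fun x => by simpa using (ho x).neg⟩

lemma LinEquiv.add_right (h : C.LinEquiv D D') (F : Divisor C) :
    C.LinEquiv (D + F) (D' + F) := by
  obtain ⟨f, hf, ho⟩ := h
  exact ⟨f, hf, fun x => by simpa using ho x⟩

lemma LinEquiv.sub_right (h : C.LinEquiv D D') (F : Divisor C) :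
    C.LinEquiv (D - F) (D' - F) := by
  simpa only [sub_eq_add_neg] using h.add_right (-F)

lemma Effective.equivEffective (hE : C.Effective E) : C.EquivEffective E :=
  ⟨E, hE, LinEquiv.refl E⟩

lemma EquivEffective.add_effective (h : C.EquivEffective D) (hF : C.Effective F) :
    C.EquivEffective (D + F) := by
  obtain ⟨G, hG, hDG⟩ := h
  exact ⟨G + F, hG.add hF, hDG.add_right F⟩

end LinearEquivalence

section PrincipalDivisorDegree

/-- Junk value `0` where `f` has no slope along `b`. -/
noncomputable def slope (f : C.Γ → ℝ) (b : C.G.E × ℝ × Bool) : ℤ :=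
  if h : ∃ m, C.HasBranchSlope f b m then h.choose else 0

variable {f : C.Γ → ℝ}

lemma HasBranchSlope.slope_eq {b : C.G.E × ℝ × Bool} {m : ℤ} (h : C.HasBranchSlope f b m) :
    C.slope f b = m := by
  have hex : ∃ m, C.HasBranchSlope f b m := ⟨m, h⟩
  rw [slope, dif_pos hex]
  exact hex.choose_spec.unique h

lemma HasOrderAt.eq_sum_slope {x : C.Γ} {n : ℤ} (h : C.HasOrderAt f x n)
    {S : Finset (C.G.E × ℝ × Bool)} (hS : ∀ b, b ∈ S ↔ C.IsBranchAt b x) :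
    n = ∑ b ∈ S, C.slope f b := by
  obtain ⟨S', m, hS', hm, rfl⟩ := h
  obtain rfl : S' = S := Finset.ext fun b => (hS' b).trans (hS b).symm
  exact Finset.sum_congr rfl fun b hb => (HasBranchSlope.slope_eq (hm b hb)).symm

section AffinePiece

variable {e : C.G.E} {a c : ℝ} {k : ℤ} {r : ℝ}
  (haff : ∀ s ∈ Set.Icc a c, f (C.edge e s) = k * s + r)
include haff

lemma slope_right_of_affine (hc : c ≤ C.G.len e) {s : ℝ} (hs : s ∈ Set.Ico a c) :
    C.slope f (e, s, true) = k :=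
  HasBranchSlope.slope_eq ⟨c - s, by linarith [hs.2], by linarith, fun σ hσ => by
    rw [haff σ ⟨hs.1.trans hσ.1, by linarith [hσ.2]⟩, haff s ⟨hs.1, hs.2.le⟩]; ring⟩

lemma slope_left_of_affine (ha : 0 ≤ a) {s : ℝ} (hs : s ∈ Set.Ioc a c) :
    C.slope f (e, s, false) = -k :=
  HasBranchSlope.slope_eq ⟨s - a, by linarith [hs.1], by linarith, fun σ hσ => by
    rw [haff σ ⟨by linarith [hσ.1], hσ.2.trans hs.2⟩, haff s ⟨hs.1.le, hs.2⟩]; push_cast; ring⟩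

end AffinePiece

lemma exists_mem_Ioo_of_partition {n : ℕ} {t : ℕ → ℝ} {s : ℝ} (hs : s ∈ Set.Icc (t 0) (t n))
    (hst : ∀ i ≤ n, t i ≠ s) :
    ∃ i < n, s ∈ Set.Ioo (t i) (t (i + 1)) := by
  have hn : n ≠ 0 := fun h => hst 0 (Nat.zero_le n) (le_antisymm hs.1 (h ▸ hs.2))
  have hex : s < t (n - 1 + 1) := by
    rw [Nat.sub_add_cancel (Nat.pos_of_ne_zero hn)]
    exact lt_of_le_of_ne hs.2 (hst n le_rfl).symm
  have hj : ∃ j, s < t (j + 1) := ⟨_, hex⟩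
  have hfind : Nat.find hj ≤ n - 1 := Nat.find_min' hj hex
  refine ⟨Nat.find hj, by omega, lt_of_le_of_ne ?_ (hst _ (by omega)), Nat.find_spec hj⟩
  rcases Nat.eq_zero_or_eq_succ_pred (Nat.find hj) with h | h
  · exact h ▸ hs.1
  · rw [h]; exact not_lt.mp (Nat.find_min hj (by omega))

/-- Between consecutive points of `Q` the function is affine, so the right slope at one point
cancels the left slope at the next. -/
lemma IsRational.exists_sum_slope_edge_eq_zero (hf : C.IsRational f) (e : C.G.E) :
    ∃ P : Finset ℝ, (∀ s ∈ P, s ∈ Set.Icc 0 (C.G.len e)) ∧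
      ∀ Q : Finset ℝ, P ⊆ Q → (∀ s ∈ Q, s ∈ Set.Icc 0 (C.G.len e)) →
        ∑ s ∈ Q, ((if s < C.G.len e then C.slope f (e, s, true) else 0) +
          (if 0 < s then C.slope f (e, s, false) else 0)) = 0 := by
  obtain ⟨n, t, -, h0, hl, hmono, hpiece⟩ := hf.2 e
  choose! k r hkr using hpiece
  have hsm : StrictMonoOn t (Set.Iic n) := strictMonoOn_Iic_of_lt_succ fun i hi => hmono i hi
  have ht0 : ∀ i ≤ n, 0 ≤ t i := fun i hi =>
    h0 ▸ hsm.monotoneOn (Set.mem_Iic.mpr (Nat.zero_le n)) hi (Nat.zero_le i)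
  have htl : ∀ i ≤ n, t i ≤ C.G.len e := fun i hi =>
    hl ▸ hsm.monotoneOn hi (Set.mem_Iic.mpr le_rfl) hi
  have hR : ∀ i < n, ∀ s ∈ Set.Ico (t i) (t (i + 1)), C.slope f (e, s, true) = k i :=
    fun i hi _ => slope_right_of_affine (hkr i hi) (htl (i + 1) hi)
  have hL : ∀ i < n, ∀ s ∈ Set.Ioc (t i) (t (i + 1)), C.slope f (e, s, false) = -k i :=
    fun i hi _ => slope_left_of_affine (hkr i hi) (ht0 i hi.le)
  refine ⟨(Finset.range (n + 1)).image t, ?_, fun Q hPQ hQ => ?_⟩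
  · simp only [Finset.mem_image, Finset.mem_range]
    rintro _ ⟨i, hi, rfl⟩
    exact ⟨ht0 i (by omega), htl i (by omega)⟩
  rw [← Finset.sum_sdiff hPQ, Finset.sum_image fun i hi j hj h => hsm.injOn
    (Set.mem_Iic.mpr (Nat.lt_succ_iff.mp (Finset.mem_range.mp hi)))
    (Set.mem_Iic.mpr (Nat.lt_succ_iff.mp (Finset.mem_range.mp hj))) h]
  have hinterior : ∀ s ∈ Q \ (Finset.range (n + 1)).image t,
      (if s < C.G.len e then C.slope f (e, s, true) else 0) +
        (if 0 < s then C.slope f (e, s, false) else 0) = 0 := by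
    intro s hs
    obtain ⟨hsQ, hsP⟩ := Finset.mem_sdiff.mp hs
    obtain ⟨i, hi, hsi⟩ := exists_mem_Ioo_of_partition (h0 ▸ hl ▸ hQ s hsQ)
      fun j hj hjs => hsP (Finset.mem_image.mpr ⟨j, Finset.mem_range.mpr (by omega), hjs⟩)
    rw [if_pos (hsi.2.trans_le (htl _ hi)), if_pos ((ht0 i hi.le).trans_lt hsi.1),
      hR i hi s ⟨hsi.1.le, hsi.2⟩, hL i hi s ⟨hsi.1, hsi.2.le⟩, add_neg_cancel]
  have hlt_len : ∀ i ≤ n, (t i < C.G.len e ↔ i < n) := fun i hi => by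
    rw [← hl]; exact hsm.lt_iff_lt hi (Set.mem_Iic.mpr le_rfl)
  have hpos : ∀ i ≤ n, (0 < t i ↔ 0 < i) := fun i hi => by
    rw [← h0]; exact hsm.lt_iff_lt (Set.mem_Iic.mpr (Nat.zero_le n)) hi
  rw [Finset.sum_eq_zero hinterior, zero_add, Finset.sum_add_distrib, Finset.sum_range_succ,
    Finset.sum_range_succ', if_neg ((hlt_len n le_rfl).not.mpr (lt_irrefl n)),
    if_neg ((hpos 0 (Nat.zero_le n)).not.mpr (lt_irrefl 0)), add_zero, add_zero,
    ← Finset.sum_add_distrib]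
  refine Finset.sum_eq_zero fun i hi => ?_
  have hi := Finset.mem_range.mp hi
  rw [if_pos ((hlt_len i hi.le).mpr hi), if_pos ((hpos (i + 1) hi).mpr i.succ_pos),
    hR i hi _ ⟨le_rfl, hmono i hi⟩, hL i hi _ ⟨hmono i hi, le_rfl⟩, add_neg_cancel]

theorem deg_eq_zero_of_hasOrderAt (hf : C.IsRational f) {D : Divisor C}
    (hord : ∀ x, C.HasOrderAt f x (D x)) : C.deg D = 0 := by
  choose P hPlen hsum using hf.exists_sum_slope_edge_eq_zero
  set T : Finset C.Γ := D.support ∪ Finset.univ.biUnion fun e => (P e).image (C.edge e)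
  set S : C.Γ → Finset (C.G.E × ℝ × Bool) := fun x => (finite_setOf_isBranchAt x).toFinset
  set Q : C.G.E → Finset ℝ := fun e => (finite_edge_preimage e T.finite_toSet).toFinset
  have hS : ∀ x b, b ∈ S x ↔ C.IsBranchAt b x := fun x _ => Set.Finite.mem_toFinset _
  have hQ : ∀ e s, s ∈ Q e ↔ s ∈ Set.Icc 0 (C.G.len e) ∧ C.edge e s ∈ T :=
    fun e _ => Set.Finite.mem_toFinset _
  set dir : C.G.E → ℝ × Bool → Prop := fun e p => if p.2 then p.1 < C.G.len e else 0 < p.1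
  have hbranches : ∀ b, b ∈ T.biUnion S ↔
      b.1 ∈ Finset.univ ∧ b.2 ∈ (Q b.1 ×ˢ Finset.univ).filter (dir b.1) := by
    rintro ⟨e, s, d⟩
    simp only [Finset.mem_biUnion, hS, Finset.mem_univ, Finset.mem_filter, Finset.mem_product,
      hQ, IsBranchAt, true_and, and_true]
    exact ⟨fun ⟨x, hx, hex, hs, hd⟩ => ⟨⟨hs, hex ▸ hx⟩, hd⟩,
      fun ⟨⟨hs, hx⟩, hd⟩ => ⟨_, hx, rfl, hs, hd⟩⟩
  calc C.deg D = ∑ x ∈ T, D x := deg_eq_sum_of_support_subset Finset.subset_union_left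
    _ = ∑ x ∈ T, ∑ b ∈ S x, C.slope f b :=
      Finset.sum_congr rfl fun x _ => (hord x).eq_sum_slope (hS x)
    _ = ∑ b ∈ T.biUnion S, C.slope f b := by
      refine (Finset.sum_biUnion fun x _ y _ hxy => Finset.disjoint_left.mpr ?_).symm
      exact fun b hbx hby => hxy (((hS x b).mp hbx).1.symm.trans ((hS y b).mp hby).1)
    _ = ∑ e, ∑ p ∈ (Q e ×ˢ Finset.univ).filter (dir e), C.slope f (e, p) :=
      Finset.sum_finset_product' _ _ _ hbranches (f := fun e p => C.slope f (e, p))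
    _ = 0 := by
      refine Finset.sum_eq_zero fun e _ => ?_
      rw [Finset.sum_filter, Finset.sum_product]
      simp only [Fintype.sum_bool, if_true, Bool.false_eq_true, if_false]
      refine hsum e (Q e) (fun s hs => (hQ e s).mpr ⟨hPlen e s hs, ?_⟩)
        fun s hs => ((hQ e s).mp hs).1
      exact Finset.mem_union_right _ (Finset.mem_biUnion.mpr
        ⟨e, Finset.mem_univ e, Finset.mem_image_of_mem _ hs⟩)

lemma LinEquiv.deg_eq {D D' : Divisor C} (h : C.LinEquiv D D') : C.deg D = C.deg D' := by
  obtain ⟨f, hf, ho⟩ := h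
  have := deg_eq_zero_of_hasOrderAt hf (D := D - D') fun x => ho x
  rw [deg_sub] at this
  omega

lemma EquivEffective.deg_nonneg {D : Divisor C} (h : C.EquivEffective D) : 0 ≤ C.deg D := by
  obtain ⟨E, hE, hDE⟩ := h
  exact hDE.deg_eq ▸ hE.deg_nonneg

end PrincipalDivisorDegree

section Reduced

def branchParam (b : C.G.E × ℝ × Bool) (δ : ℝ) : ℝ :=
  if b.2.2 then b.2.1 + δ else b.2.1 - δ

variable {b : C.G.E × ℝ × Bool} {v : C.Γ}

lemma continuous_branchParam (b : C.G.E × ℝ × Bool) : Continuous (branchParam b) := by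
  unfold branchParam
  split_ifs <;> fun_prop

lemma branchParam_zero (b : C.G.E × ℝ × Bool) : branchParam b 0 = b.2.1 := by
  unfold branchParam
  split_ifs <;> simp

lemma IsBranchAt.eventually_mem_Ioo (hb : C.IsBranchAt b v) :
    ∃ ε > 0, ∀ δ ∈ Set.Ioc 0 ε, branchParam b δ ∈ Set.Ioo 0 (C.G.len b.1) := by
  obtain ⟨-, ⟨h0, hl⟩, hdir⟩ := hb
  unfold branchParam
  split_ifs at hdir ⊢
  · exact ⟨(C.G.len b.1 - b.2.1) / 2, by linarith, fun δ hδ =>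
      ⟨by linarith [hδ.1], by linarith [hδ.2]⟩⟩
  · exact ⟨b.2.1 / 2, by linarith, fun δ hδ => ⟨by linarith [hδ.2], by linarith [hδ.1]⟩⟩

lemma HasBranchSlope.eventually_eq {h : C.Γ → ℝ} {m : ℤ} (hb : C.IsBranchAt b v)
    (hs : C.HasBranchSlope h b m) : ∃ ε > 0, ∀ δ ∈ Set.Icc 0 ε,
      branchParam b δ ∈ Set.Icc 0 (C.G.len b.1) ∧
        h (C.edge b.1 (branchParam b δ)) = h v + m * δ := by
  obtain ⟨hv, ⟨h0, hl⟩, -⟩ := hb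
  subst hv
  unfold HasBranchSlope at hs
  unfold branchParam
  split_ifs at hs ⊢
  · obtain ⟨ε, hε, hle, H⟩ := hs
    exact ⟨ε, hε, fun δ hδ => ⟨⟨by linarith [hδ.1], by linarith [hδ.2]⟩,
      by rw [H _ ⟨by linarith [hδ.1], by linarith [hδ.2]⟩]; ring⟩⟩
  · obtain ⟨ε, hε, hle, H⟩ := hs
    exact ⟨ε, hε, fun δ hδ => ⟨⟨by linarith [hδ.2], by linarith [hδ.1]⟩,
      by rw [H _ ⟨by linarith [hδ.2], by linarith [hδ.1]⟩]; ring⟩⟩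

lemma BranchLeaving.eventually_eq {X : Set C.Γ} (hb : C.BranchLeaving X v b) :
    ∃ ε > 0, ∀ δ ∈ Set.Ioc 0 ε,
      C.edge b.1 (branchParam b δ) ∈ X → C.edge b.1 (branchParam b δ) = v := by
  obtain ⟨-, hl⟩ := hb
  unfold branchParam
  split_ifs at hl ⊢
  · obtain ⟨ε, hε, -, H⟩ := hl
    exact ⟨ε, hε, fun δ hδ => H _ ⟨by linarith [hδ.1], by linarith [hδ.2]⟩⟩
  · obtain ⟨ε, hε, -, H⟩ := hl
    exact ⟨ε, hε, fun δ hδ => H _ ⟨by linarith [hδ.2], by linarith [hδ.1]⟩⟩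

variable {h : C.Γ → ℝ} {m : ℤ}

lemma HasBranchSlope.nonneg_of_isMin (hmin : ∀ y, h v ≤ h y) (hb : C.IsBranchAt b v)
    (hs : C.HasBranchSlope h b m) : 0 ≤ m := by
  obtain ⟨ε, hε, H⟩ := hs.eventually_eq hb
  have := (H ε ⟨hε.le, le_rfl⟩).2 ▸ hmin (C.edge b.1 (branchParam b ε))
  have hmε : (0 : ℝ) ≤ m * ε := by linarith
  exact_mod_cast (mul_nonneg_iff_of_pos_right hε).mp hmε

/-- A flat leaving branch would have an initial segment in the minimum locus, hence in `X`. -/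
lemma HasBranchSlope.one_le_of_branchLeaving (hmin : ∀ y, h v ≤ h y)
    (hs : C.HasBranchSlope h b m)
    (hl : C.BranchLeaving (connectedComponentIn {y | h y = h v} v) v b) : 1 ≤ m := by
  have hb := hl.1
  obtain ⟨ε₁, hε₁, Hslope⟩ := hs.eventually_eq hb
  obtain ⟨ε₂, hε₂, Hleave⟩ := hl.eventually_eq
  obtain ⟨ε₃, hε₃, Hint⟩ := hb.eventually_mem_Ioo
  by_contra! hm
  obtain rfl : m = 0 := le_antisymm (by omega) (hs.nonneg_of_isMin hmin hb)
  set ε := min ε₁ (min ε₂ ε₃)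
  have hε : 0 < ε := lt_min hε₁ (lt_min hε₂ hε₃)
  have hε₁' : ε ≤ ε₁ := min_le_left _ _
  set γ : ℝ → C.Γ := fun δ => C.edge b.1 (branchParam b δ)
  have hseg : γ '' Set.Icc 0 ε ⊆ connectedComponentIn {y | h y = h v} v := by
    refine IsPreconnected.subset_connectedComponentIn ?_ ⟨0, ⟨le_rfl, hε.le⟩, ?_⟩ ?_
    · refine isPreconnected_Icc.image _ ((lipschitzOnWith_edge b.1).continuousOn.comp
        (continuous_branchParam b).continuousOn fun δ hδ => ?_)
      exact (Hslope δ ⟨hδ.1, hδ.2.trans hε₁'⟩).1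
    · simp only [γ, branchParam_zero, hb.1]
    · rintro _ ⟨δ, hδ, rfl⟩
      simpa using (Hslope δ ⟨hδ.1, hδ.2.trans hε₁'⟩).2
  have hγε := Hleave ε ⟨hε, min_le_of_right_le (min_le_left _ _)⟩
    (hseg ⟨ε, ⟨hε.le, le_rfl⟩, rfl⟩)
  refine edge_ne_of_mem_Ioo (Hint ε ⟨hε, min_le_of_right_le (min_le_right _ _)⟩) hb.2.1 ?_
    (hγε.trans hb.1.symm)
  unfold branchParam
  split_ifs <;> linarith

lemma outDeg_le_of_isMin (hmin : ∀ y, h v ≤ h y) {n : ℤ} (ho : C.HasOrderAt h v n) :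
    (C.outDeg (connectedComponentIn {y | h y = h v} v) v : ℤ) ≤ n := by
  obtain ⟨S, k, hS, hk, rfl⟩ := ho
  set X := connectedComponentIn {y | h y = h v} v
  have hleaving : {b | C.BranchLeaving X v b} = ↑(S.filter (C.BranchLeaving X v)) := by
    ext b
    simp only [Finset.coe_filter, hS]
    exact ⟨fun hl => ⟨hl.1, hl⟩, fun hl => hl.2⟩
  rw [outDeg, hleaving, Set.ncard_coe_finset, Finset.card_eq_sum_ones, Nat.cast_sum,
    Nat.cast_one, ← Finset.sum_filter_add_sum_filter_not S (C.BranchLeaving X v)]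
  refine le_add_of_le_of_nonneg (Finset.sum_le_sum fun b hb => ?_)
    (Finset.sum_nonneg fun b hb => ?_)
  · obtain ⟨hbS, hl⟩ := Finset.mem_filter.mp hb
    exact HasBranchSlope.one_le_of_branchLeaving hmin (hk b hbS) hl
  · obtain ⟨hbS, -⟩ := Finset.mem_filter.mp hb
    exact HasBranchSlope.nonneg_of_isMin hmin ((hS b).mp hbS) (hk b hbS)

/-- Otherwise the component `X` of the minimum locus of `h` through a minimum point avoids `P`,
and at each boundary point `v` of `X` the leaving branches force
`H(v) = ord_h(v) + E(v) ≥ deg_X^out(v)`. -/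
lemma IsReduced.apply_le {P : C.Γ} {H E : Divisor C} (hred : C.IsReduced P H)
    (hE : C.Effective E) (hc : Continuous h) (ho : ∀ x, C.HasOrderAt h x (H x - E x)) :
    E P ≤ H P := by
  obtain ⟨x₀, -, hx₀⟩ := isCompact_univ.exists_isMinOn Set.univ_nonempty hc.continuousOn
  have hmin : ∀ y, h x₀ ≤ h y := fun y => hx₀ (Set.mem_univ y)
  by_cases hP : h P = h x₀
  · have := outDeg_le_of_isMin (fun y => hP ▸ hmin y) (ho P)
    omega
  set X := connectedComponentIn {y | h y = h x₀} x₀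
  have hXclosed : IsClosed X :=
    isClosed_connectedComponentIn (isClosed_eq hc continuous_const) x₀
  have hXsub : X ⊆ {y | h y = h x₀} := connectedComponentIn_subset _ _
  obtain ⟨v, hvX, hvlt⟩ := hred.2 X hXclosed
    (isConnected_connectedComponentIn_iff.mpr rfl) fun hPX => hP (hXsub hPX)
  replace hvX : v ∈ X := hXclosed.frontier_subset hvX
  have hv : h v = h x₀ := hXsub hvX
  have hout := outDeg_le_of_isMin (fun y => hv ▸ hmin y) (ho v)
  rw [hv, ← connectedComponentIn_eq hvX] at hout
  change (C.outDeg X v : ℤ) ≤ _ at hout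
  have := hE v
  omega

lemma IsReduced.one_le_apply_iff {P : C.Γ} {H D : Divisor C} (hred : C.IsReduced P H)
    (hHD : C.LinEquiv H D) : 1 ≤ H P ↔ C.EquivEffective (D - Finsupp.single P 1) := by
  constructor
  · refine fun hP => ⟨H - Finsupp.single P 1, fun v => ?_, (hHD.sub_right _).symm⟩
    rw [Finsupp.sub_apply, Finsupp.single_apply]
    split_ifs with hv
    · subst hv; omega
    · simpa using hred.1 v (Ne.symm hv)
  · rintro ⟨F, hF, g, hg, hog⟩
    obtain ⟨f, hf, hof⟩ := hHD
    have ho : ∀ x, C.HasOrderAt (fun y => f y + g y) x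
        (H x - (F + Finsupp.single P 1 : Divisor C) x) := fun x => by
      convert (hof x).add (hog x) using 1
      simp only [Finsupp.add_apply, Finsupp.sub_apply]
      ring
    have := hred.apply_le (hF.add (effective_single P zero_le_one)) (hf.1.add hg.1) ho
    simp only [Finsupp.add_apply, Finsupp.single_eq_same] at this
    linarith [hF P]

end Reduced

section Rank

variable {A : Set C.Γ} {D : Divisor C}

lemma rank_eq_rankOn_univ (D : Divisor C) : C.rank D = C.rankOn Set.univ D := by
  simp only [rank, rankOn, Set.subset_univ, forall_const]

/-- Junk value: with no admissible test divisors the set defining `rankOn` is unbounded. -/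
lemma rankOn_empty (D : Divisor C) : C.rankOn ∅ D = 0 := by
  unfold rankOn
  refine Int.csSup_of_not_bddAbove fun ⟨r, hr⟩ => ?_
  have : max r 0 + 1 ≤ r := mem_upperBounds.mp hr _ ⟨by omega, fun E _ hdeg hsupp => ?_⟩
  · omega
  rw [Finsupp.support_eq_empty.mp (Finset.coe_eq_empty.mp (Set.subset_empty_iff.mp hsupp)),
    deg_zero] at hdeg
  omega

lemma le_rankOn_iff (hA : A.Nonempty) {r : ℤ} (hr : 0 ≤ r) :
    r ≤ C.rankOn A D ↔ ∀ E : Divisor C, C.Effective E → C.deg E = r → ↑E.support ⊆ A →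
      C.EquivEffective (D - E) := by
  obtain ⟨x, hx⟩ := hA
  have hsingle : ∀ n : ℤ, ↑(Finsupp.single x n).support ⊆ A := fun n v hv =>
    (Finset.mem_singleton.mp (Finsupp.support_single_subset hv)) ▸ hx
  set R := {r : ℤ | -1 ≤ r ∧ ∀ E : Divisor C, C.Effective E → C.deg E = r → ↑E.support ⊆ A →
    C.EquivEffective (D - E)}
  have hbdd : BddAbove R := by
    refine ⟨max (C.deg D) (-1), fun s ⟨hs, hsE⟩ => ?_⟩
    by_cases hs0 : s < 0
    · exact le_max_of_le_right (by omega)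
    have := (hsE _ (effective_single x (not_lt.mp hs0)) (deg_single x s) (hsingle s)).deg_nonneg
    rw [deg_sub, deg_single] at this
    exact le_max_of_le_left (by omega)
  refine ⟨fun hle E hE hdeg hsupp => ?_, fun h => le_csSup hbdd ⟨by omega, h⟩⟩
  obtain ⟨-, hmax⟩ := Int.csSup_mem (s := R) ⟨-1, le_rfl, fun E hE hdeg => by
    have := hE.deg_nonneg; omega⟩ hbdd
  have hF := effective_single x (show 0 ≤ sSup R - r from sub_nonneg.mpr hle)
  have := hmax (E + Finsupp.single x (sSup R - r)) (hE.add hF)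
    (by rw [deg_add, deg_single, hdeg]; ring) (support_add_single_subset hsupp hx _)
  rw [show D - E = D - (E + Finsupp.single x (sSup R - r)) + Finsupp.single x (sSup R - r) by
    abel]
  exact this.add_effective hF

lemma one_le_rankOn_iff (hA : A.Nonempty) :
    1 ≤ C.rankOn A D ↔ ∀ P ∈ A, C.EquivEffective (D - Finsupp.single P 1) := by
  rw [le_rankOn_iff hA zero_le_one]
  refine ⟨fun h P hP => h _ (effective_single P zero_le_one) (deg_single P 1) fun v hv => ?_,
    fun h E hE hdeg hsupp => ?_⟩
  · exact (Finset.mem_singleton.mp (Finsupp.support_single_subset hv)) ▸ hP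
  · obtain ⟨P, rfl⟩ := hE.eq_single_of_deg_eq_one hdeg
    exact h P (hsupp (by simp))

lemma zero_le_rank_iff : 0 ≤ C.rank D ↔ C.EquivEffective D := by
  rw [rank_eq_rankOn_univ, le_rankOn_iff Set.univ_nonempty le_rfl]
  refine ⟨fun h => by simpa using h 0 effective_zero deg_zero (by simp), fun h E hE hdeg _ => ?_⟩
  rwa [hE.eq_zero_of_deg_eq_zero hdeg, sub_zero]

lemma one_le_rank_iff : 1 ≤ C.rank D ↔ ∀ P, C.EquivEffective (D - Finsupp.single P 1) := by
  rw [rank_eq_rankOn_univ, one_le_rankOn_iff Set.univ_nonempty]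
  simp only [Set.mem_univ, true_imp_iff]

lemma rank_zero : C.rank 0 = 0 := by
  refine le_antisymm (not_lt.mp fun h => ?_)
    (zero_le_rank_iff.mpr effective_zero.equivEffective)
  obtain ⟨P⟩ : Nonempty C.Γ := inferInstance
  have := (one_le_rank_iff.mp h P).deg_nonneg
  rw [deg_sub, deg_zero, deg_single] at this
  omega

lemma RankDetermining.nonempty (hA : C.RankDetermining A) : A.Nonempty := by
  by_contra h
  obtain rfl := Set.not_nonempty_iff_eq_empty.mp h
  obtain ⟨P⟩ : Nonempty C.Γ := inferInstance
  have := (zero_le_rank_iff.mp ((hA _).trans (rankOn_empty (-Finsupp.single P 1))).ge)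
    |>.deg_nonneg
  rw [← zero_sub, deg_sub, deg_zero, deg_single] at this
  omega

section PointwiseCriterion

variable (hA : ∀ D : Divisor C, (∀ P ∈ A, C.EquivEffective (D - Finsupp.single P 1)) →
  ∀ Q, C.EquivEffective (D - Finsupp.single Q 1))
include hA

lemma equivEffective_sub_of_supported (k : ℕ) (D : Divisor C)
    (hD : ∀ E : Divisor C, C.Effective E → C.deg E = k → ↑E.support ⊆ A →
      C.EquivEffective (D - E))
    {E : Divisor C} (hE : C.Effective E) (hdeg : C.deg E = k) : C.EquivEffective (D - E) := by
  induction k generalizing D E with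
  | zero =>
    rw [hE.eq_zero_of_deg_eq_zero hdeg, sub_zero]
    simpa using hD 0 effective_zero deg_zero (by simp)
  | succ k ih =>
    obtain ⟨Q, E', hE', rfl⟩ := hE.exists_eq_add_single (by omega)
    rw [deg_add, deg_single] at hdeg
    rw [← sub_sub, sub_right_comm]
    refine ih _ (fun F hF hdegF hsuppF => ?_) hE' (by push_cast at hdeg; omega)
    rw [sub_right_comm]
    -- `D - (Q)` passes the test in degree `k`: apply `hA` to `D - F`.
    refine hA (D - F) (fun P hP => ?_) Q
    rw [sub_sub]
    exact hD _ (hF.add (effective_single P zero_le_one))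
      (by rw [deg_add, deg_single, hdegF]; push_cast; ring)
      (support_add_single_subset hsuppF hP 1)

lemma rank_eq_rankOn_of_forall_equivEffective_sub_single (D : Divisor C) :
    C.rank D = C.rankOn A D := by
  unfold rank rankOn
  congr 1
  ext r
  refine and_congr_right fun _ => ⟨fun h E hE hdeg _ => h E hE hdeg, fun h E hE hdeg => ?_⟩
  lift r to ℕ using hdeg ▸ hE.deg_nonneg
  exact equivEffective_sub_of_supported hA r D h hE hdeg

end PointwiseCriterion

end Rank

end TropicalCurve

/-- Let `Γ` be a tropical curve. A subset `A ⊆ Γ` is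
rank-determining if and only if for every divisor `D` of nonnegative rank on `Γ`
the following are equivalent: (i) `r(D) ≥ 1`; (ii) for every point `P ∈ A`, `P`
lies in the support of the `P`-reduced divisor `D_P` (i.e. `D_P(P) ≥ 1`). -/
theorem rankDetermining_iff_reduced_support_criterion (C : TropicalCurve)
    (A : Set C.Γ)
    (DP : TropicalCurve.Divisor C → C.Γ → TropicalCurve.Divisor C)
    (hDP : ∀ (D : TropicalCurve.Divisor C) (P : C.Γ), 0 ≤ C.rank D →
      C.IsReduced P (DP D P) ∧ C.LinEquiv (DP D P) D) :
    C.RankDetermining A ↔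
      ∀ D : TropicalCurve.Divisor C, 0 ≤ C.rank D →
        (1 ≤ C.rank D ↔ ∀ P ∈ A, 1 ≤ DP D P P) := by
  have hreduced : ∀ D P, 0 ≤ C.rank D →
      (1 ≤ DP D P P ↔ C.EquivEffective (D - Finsupp.single P 1)) :=
    fun D P hD => (hDP D P hD).1.one_le_apply_iff (hDP D P hD).2
  constructor
  · intro hRD D hD
    rw [hRD D, TropicalCurve.one_le_rankOn_iff hRD.nonempty]
    exact forall₂_congr fun P _ => (hreduced D P hD).symm
  · intro hcrit
    obtain ⟨x, hx⟩ : A.Nonempty := by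
      by_contra h
      obtain rfl := Set.not_nonempty_iff_eq_empty.mp h
      have := (hcrit 0 TropicalCurve.rank_zero.ge).mpr fun P hP => hP.elim
      rw [TropicalCurve.rank_zero] at this
      omega
    refine TropicalCurve.rank_eq_rankOn_of_forall_equivEffective_sub_single fun D hD => ?_
    have hD0 : 0 ≤ C.rank D := TropicalCurve.zero_le_rank_iff.mpr <| by
      simpa using (hD x hx).add_effective (TropicalCurve.effective_single x zero_le_one)
    exact TropicalCurve.one_le_rank_iff.mp
      ((hcrit D hD0).mpr fun P hP => (hreduced D P hD0).mpr (hD P hP))
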